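/- arXiv:2203.08525 — 5 statements merged into one kernel-verified Lean document; each statement's English description precedes it below -/
import Mathlib

section
/- Let f : X → X be a map on a finite set X and let n be a natural number that is a common multiple of the minimal periods of all periodic points of f and satisfies n ≥ |X|. Then for every x ∈ X, the intersection of the ∼_f-equivalence class of x with Per f equals the singleton {f^n(x)}. -/
/-- `n` is a periodic exponent of `f`: it is at least the cardinality of `X` and a
common multiple of the minimal periods of all periodic points of `f`. -/
def IsPeriodicExponent {X : Type*} (f : X → X) (n : ℕ) : Prop :=
  Nat.card X ≤ n ∧ ∀ x ∈ Function.periodicPts f, Function.minimalPeriod f x ∣ n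

/-- In a finite type, some iterate of any point is periodic, reached within `Nat.card X` steps. -/
lemma exists_iterate_mem_periodicPts {X : Type*} [Finite X] (f : X → X) (x : X) :
    ∃ a ≤ Nat.card X, f^[a] x ∈ Function.periodicPts f := by
  have : Nonempty X := ⟨x⟩
  cases nonempty_fintype X
  have hcard : Fintype.card X < Fintype.card (Fin (Fintype.card X + 1)) := by simp
  obtain ⟨i, j, hij, hfij⟩ :=
    Fintype.exists_ne_map_eq_of_card_lt (fun i : Fin (Fintype.card X + 1) => f^[(i : ℕ)] x) hcard
  wlog hlt : (i : ℕ) < (j : ℕ) generalizing i j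
  · exact this j i hij.symm hfij.symm
      (lt_of_le_of_ne (not_lt.mp hlt) (fun h => hij (Fin.ext h.symm)))
  refine ⟨(i : ℕ), ?_, ⟨(j : ℕ) - (i : ℕ), Nat.sub_pos_of_lt hlt, ?_⟩⟩
  · rw [Nat.card_eq_fintype_card]; omega
  · show f^[(j : ℕ) - (i : ℕ)] (f^[(i : ℕ)] x) = f^[(i : ℕ)] x
    rw [← Function.iterate_add_apply, Nat.sub_add_cancel hlt.le]
    exact hfij.symm

theorem class_inter_per_eq_singleton {X : Type*} [Finite X] (f : X → X) (n : ℕ)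
    (hn : IsPeriodicExponent f n) (x : X) :
    {y | ∃ m : ℕ, f^[m] y = f^[m] x} ∩ Function.periodicPts f = {f^[n] x} := by
  obtain ⟨hcard, hdvd⟩ := hn
  -- f^[n] x is periodic
  obtain ⟨a, ha, hper⟩ := exists_iterate_mem_periodicPts f x
  have han : a ≤ n := ha.trans hcard
  have hfnx : f^[n] x ∈ Function.periodicPts f := by
    obtain ⟨k, hk, hkper⟩ := hper
    have : f^[n] x = f^[n - a] (f^[a] x) := by
      rw [← Function.iterate_add_apply, Nat.sub_add_cancel han]
    rw [this]
    exact ⟨k, hk, hkper.apply_iterate _⟩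
  have hfnx_per : Function.IsPeriodicPt f n (f^[n] x) :=
    (Function.isPeriodicPt_iff_minimalPeriod_dvd).mpr (hdvd _ hfnx)
  -- multiples: f^[k*n] (f^[n] x) = f^[n] x
  have hmul : ∀ k : ℕ, f^[k * n] (f^[n] x) = f^[n] x := fun k => by
    have := (hfnx_per.const_mul k).eq
    simpa using this
  have hn_pos : 0 < n := by
    have : Nonempty X := ⟨x⟩
    have := Nat.card_pos (α := X)
    omega
  ext y
  simp only [Set.mem_inter_iff, Set.mem_setOf_eq, Set.mem_singleton_iff]
  constructor
  · rintro ⟨⟨m, hm⟩, hy⟩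
    have hy_per : Function.IsPeriodicPt f n y :=
      (Function.isPeriodicPt_iff_minimalPeriod_dvd).mpr (hdvd _ hy)
    -- take M = (m+1)*n ≥ m
    set M := (m + 1) * n with hM
    have hMm : m ≤ M := by
      have : m + 1 ≤ (m + 1) * n := Nat.le_mul_of_pos_right _ hn_pos
      omega
    have h1 : f^[M] y = y := by
      have := (hy_per.mul_const (m + 1)).eq
      rwa [Nat.mul_comm] at this
    have h2 : f^[M] y = f^[M] x := by
      rw [← Nat.sub_add_cancel hMm, Function.iterate_add_apply, Function.iterate_add_apply, hm]
    have h3 : f^[M] x = f^[n] x := by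
      have : M = m * n + n := by ring
      rw [this, Function.iterate_add_apply]
      exact hmul m
    rw [← h1, h2, h3]
  · rintro rfl
    exact ⟨⟨n, hfnx_per.eq⟩, hfnx⟩
end

section
/- Let f : X → X be a map on a finite set X. If n₁ and n₂ are both periodic exponents of f, then f^{n₁} = f^{n₂}. -/
theorem periodic_exponent_iterate_eq {X : Type*} [Finite X] (f : X → X) (n₁ n₂ : ℕ)
    (h₁ : IsPeriodicExponent f n₁) (h₂ : IsPeriodicExponent f n₂) :
    f^[n₁] = f^[n₂] := by
  cases isEmpty_or_nonempty X with
  | inl h => funext x; exact (h.false x).elim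
  | inr hne =>
  have := Fintype.ofFinite X
  funext x
  set m := Nat.card X with hm
  -- pigeonhole on the first m+1 iterates
  have hcard : Fintype.card X < Fintype.card (Fin (m + 1)) := by
    simp [hm, Nat.card_eq_fintype_card]
  obtain ⟨a, b, hab, heq⟩ :=
    Fintype.exists_ne_map_eq_of_card_lt (fun i : Fin (m + 1) => f^[(i : ℕ)] x) hcard
  wlog hlt : (a : ℕ) < (b : ℕ) generalizing a b
  · exact this b a hab.symm heq.symm
      (lt_of_le_of_ne (not_lt.mp hlt) (fun h => hab (Fin.ext h.symm)))
  -- y := f^[a] x is a periodic point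
  obtain ⟨y, hy⟩ : ∃ y, f^[(a : ℕ)] x = y := ⟨_, rfl⟩
  have hyp : y ∈ Function.periodicPts f := by
    refine Function.mk_mem_periodicPts (n := (b : ℕ) - a) (Nat.sub_pos_of_lt hlt) ?_
    show f^[(b : ℕ) - a] y = y
    rw [← hy, ← Function.iterate_add_apply, Nat.sub_add_cancel hlt.le]
    exact heq.symm
  have hp1 : Function.IsPeriodicPt f n₁ y :=
    (Function.isPeriodicPt_iff_minimalPeriod_dvd).mpr (h₁.2 y hyp)
  have hp2 : Function.IsPeriodicPt f n₂ y :=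
    (Function.isPeriodicPt_iff_minimalPeriod_dvd).mpr (h₂.2 y hyp)
  have ha1 : (a : ℕ) ≤ n₁ := le_trans (Nat.le_of_lt_succ a.isLt) h₁.1
  have ha2 : (a : ℕ) ≤ n₂ := le_trans (Nat.le_of_lt_succ a.isLt) h₂.1
  calc f^[n₁] x = f^[n₁ - a] y := by
        rw [← hy, ← Function.iterate_add_apply, Nat.sub_add_cancel ha1]
    _ = f^[n₁ - a] (f^[n₂] y) := by rw [hp2]
    _ = f^[n₂ - a] (f^[n₁] y) := by
        have hkey : n₁ - (a : ℕ) + n₂ = n₂ - (a : ℕ) + n₁ := by omega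
        rw [← Function.iterate_add_apply, ← Function.iterate_add_apply, hkey]
    _ = f^[n₂ - a] y := by rw [hp1]
    _ = f^[n₂] x := by
        rw [← hy, ← Function.iterate_add_apply, Nat.sub_add_cancel ha2]
end

section
/- Let a, b be positive integers and q = gcd(a, b). For every natural number n, the equation a·x + b·y = ab/q + q + n·q has a solution in positive integers x, y. -/
/-!
Writing `a = q a'`, `b = q b'` with `a'`, `b'` coprime, the right-hand side is `q (a' b' + n + 1)`,
so it suffices that every `m > a' b'` is `a' x + b' y` with `x, y ≥ 1`. Substituting `x + 1`, `y + 1`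
this asks for a nonnegative representation of `m - a' - b' ≥ (a' - 1)(b' - 1)`, which exists by
Sylvester's bound on the Frobenius number of `{a', b'}`.
-/

namespace Nat

theorem exists_pos_mul_add_mul_eq_of_coprime {p q m : ℕ} (hpq : Coprime p q) (hm : p * q < m) :
    ∃ x y : ℕ, 0 < x ∧ 0 < y ∧ p * x + q * y = m := by
  obtain ⟨hsum, hbound⟩ : p + q ≤ m ∧ (p - 1) * (q - 1) ≤ m - p - q := by
    rcases p.eq_zero_or_pos with rfl | hp
    · obtain rfl : q = 1 := coprime_zero_left q |>.mp hpq
      omega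
    rcases q.eq_zero_or_pos with rfl | hq
    · obtain rfl : p = 1 := coprime_zero_right p |>.mp hpq
      omega
    have hsum : p + q ≤ m := by nlinarith
    refine ⟨hsum, ?_⟩
    rw [Nat.sub_sub]
    zify [hp, hq, hsum]
    nlinarith
  obtain ⟨x, y, hxy⟩ := exists_add_mul_eq_of_gcd_dvd_of_mul_pred_le p q (m - p - q)
    (by simp [hpq.gcd_eq_one]) hbound
  exact ⟨x + 1, y + 1, x.succ_pos, y.succ_pos, by grind⟩

theorem exists_pos_mul_add_mul_eq_of_lcm_lt {a b m : ℕ} (hdvd : gcd a b ∣ m) (hm : lcm a b < m) :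
    ∃ x y : ℕ, 0 < x ∧ 0 < y ∧ a * x + b * y = m := by
  have hg : 0 < gcd a b := by
    refine Nat.pos_of_ne_zero fun h ↦ ?_
    obtain ⟨rfl, rfl⟩ := gcd_eq_zero_iff.mp h
    simp_all
  obtain ⟨g, a', b', -, hab, rfl, rfl⟩ := exists_coprime' hg
  rw [gcd_mul_right, hab.gcd_eq_one, one_mul] at hdvd
  obtain ⟨m', rfl⟩ := hdvd
  rw [lcm_mul_right, hab.lcm_eq_mul, mul_comm g] at hm
  obtain ⟨x, y, hx, hy, hxy⟩ :=
    exists_pos_mul_add_mul_eq_of_coprime hab (Nat.lt_of_mul_lt_mul_right hm)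
  exact ⟨x, y, hx, hy, by rw [← hxy]; ring⟩

end Nat

theorem positive_solutions_general (a b : ℕ) (ha : 1 ≤ a) (n : ℕ) :
    ∃ x y : ℕ, 1 ≤ x ∧ 1 ≤ y ∧
      a * x + b * y = a * b / Nat.gcd a b + Nat.gcd a b + n * Nat.gcd a b := by
  have hq : 0 < Nat.gcd a b := Nat.gcd_pos_of_pos_left b ha
  have hq_dvd_lcm : Nat.gcd a b ∣ Nat.lcm a b := (Nat.gcd_dvd_left a b).trans (Nat.dvd_lcm_left a b)
  rw [← Nat.lcm_eq_mul_div]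
  refine Nat.exists_pos_mul_add_mul_eq_of_lcm_lt ?_ (by nlinarith)
  exact Nat.dvd_add (Nat.dvd_add hq_dvd_lcm dvd_rfl) (dvd_mul_left _ _)

theorem positive_solutions (a b : ℕ) (ha : 1 ≤ a) (hb : 1 ≤ b) (n : ℕ) :
    ∃ x y : ℕ, 1 ≤ x ∧ 1 ≤ y ∧
      a * x + b * y = a * b / Nat.gcd a b + Nat.gcd a b + n * Nat.gcd a b :=
  positive_solutions_general a b ha n
end

section
/- Let R be a strongly connected relation on a finite set X with period q and eventual period p. Then q divides p (in particular q ≤ p). -/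
/-- The `n`-th power of a relation (`R^0 = id`). -/
def relPow {X : Type*} (R : Rel X X) : ℕ → Rel X X
  | 0 => fun x y => x = y
  | n + 1 => Relation.Comp (relPow R n) R

/-- A relation is strongly connected if any two points are joined by a walk of
positive length. -/
def StronglyConnectedRel {X : Type*} (R : Rel X X) : Prop :=
  ∀ x y : X, ∃ n : ℕ, 1 ≤ n ∧ relPow R n x y

/-- `q` is the period of `R`: the greatest common divisor of the lengths of all
cycles (closed walks of positive length) in the digraph `(X, R)`. -/
def IsPeriodOf {X : Type*} (R : Rel X X) (q : ℕ) : Prop :=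
  (∀ n : ℕ, 1 ≤ n → (∃ x, relPow R n x x) → q ∣ n) ∧
    ∀ d : ℕ, (∀ n : ℕ, 1 ≤ n → (∃ x, relPow R n x x) → d ∣ n) → d ∣ q

/-- `p` is an eventual period of `R`. -/
def IsEventualPeriod {X : Type*} (R : Rel X X) (p : ℕ) : Prop :=
  1 ≤ p ∧ ∀ i ≥ p, relPow R (i + p) = relPow R i

lemma relPow_add {X : Type*} (R : Rel X X) (m n : ℕ) :
    relPow R (m + n) = Relation.Comp (relPow R m) (relPow R n) := by
  induction n with
  | zero =>
    funext x z
    simp [relPow, Relation.Comp]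
  | succ n ih =>
    show relPow R (m + n + 1) = _
    funext x z
    simp only [relPow, ih, Relation.Comp]
    apply propext
    constructor
    · rintro ⟨y, ⟨w, hw1, hw2⟩, hy⟩
      exact ⟨w, hw1, y, hw2, hy⟩
    · rintro ⟨w, hw1, y, hy1, hy2⟩
      exact ⟨y, ⟨w, hw1, hy1⟩, hy2⟩

lemma relPow_cycle {X : Type*} (R : Rel X X) {n : ℕ} {x : X} (h : relPow R n x x)
    (k : ℕ) : relPow R (k * n) x x := by
  induction k with
  | zero => simp [relPow]
  | succ k ih =>
    have : relPow R (k * n + n) x x := by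
      rw [relPow_add]
      exact ⟨x, ih, h⟩
    simpa [Nat.succ_mul] using this

theorem period_divides_eventual_period {X : Type*} [Finite X] (R : Rel X X)
    (hconn : StronglyConnectedRel R) (q p : ℕ) (hq1 : 1 ≤ q) (hq : IsPeriodOf R q)
    (hp : IsEventualPeriod R p) :
    q ∣ p ∧ q ≤ p := by
  obtain ⟨hp1, hper⟩ := hp
  obtain ⟨hdiv, hmax⟩ := hq
  by_cases hX : Nonempty X
  · obtain ⟨x⟩ := hX
    obtain ⟨n, hn1, hcyc⟩ := hconn x x
    -- pick k with k * n ≥ p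
    have hkn : p ≤ p * n := Nat.le_mul_of_pos_right p hn1
    have h1 : relPow R (p * n) x x := relPow_cycle R hcyc p
    have h2 : relPow R (p * n + p) x x := by
      rw [hper (p * n) hkn]; exact h1
    have d1 : q ∣ p * n := hdiv _ (le_trans hp1 hkn) ⟨x, h1⟩
    have d2 : q ∣ p * n + p :=
      hdiv _ (le_trans hp1 (Nat.le_add_left _ _)) ⟨x, h2⟩
    have dq : q ∣ p := (Nat.dvd_add_right d1).mp d2
    exact ⟨dq, Nat.le_of_dvd hp1 dq⟩
  · -- X empty: every d divides q, contradiction with 1 ≤ q unless q ∣ p anyway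
    have : ∀ d : ℕ, d ∣ q := by
      intro d
      apply hmax
      intro n hn ⟨x, _⟩
      exact absurd ⟨x⟩ hX
    have hq0 : q = 0 := Nat.eq_zero_of_dvd_of_lt (this (q + 1)) (Nat.lt_succ_self q)
    omega
end

section
/- Let R be a relation on a finite set X with eventual period p. Then for every x ∈ X and every n ∈ ℕ, R^{p+n}(x) = R^p(R^{p+n}(x) ∩ X_R), where X_R = {x ∈ X | ∃ k ≥ 1, x ∈ R^k(x)} is the recurrent set of R. -/
/-- The recurrent set of `R`: points lying on a cycle of positive length. -/
def recurrentSet {X : Type*} (R : Rel X X) : Set X :=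
  {x | ∃ k : ℕ, 1 ≤ k ∧ relPow R k x x}

lemma relPow_add_s19 {X : Type*} (R : Rel X X) (a b : ℕ) (x y : X) :
    relPow R (a + b) x y ↔ ∃ z, relPow R a x z ∧ relPow R b z y := by
  induction b generalizing y with
  | zero => simp [relPow]
  | succ b ih =>
    show Relation.Comp (relPow R (a + b)) R x y ↔ _
    constructor
    · rintro ⟨w, hw, hwy⟩
      obtain ⟨z, hz, hzw⟩ := (ih w).1 hw
      exact ⟨z, hz, ⟨w, hzw, hwy⟩⟩
    · rintro ⟨z, hz, w, hzw, hwy⟩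
      exact ⟨w, (ih w).2 ⟨z, hz, hzw⟩, hwy⟩

lemma relPow_periodic {X : Type*} (R : Rel X X) (p : ℕ) (hp : IsEventualPeriod R p) :
    ∀ i ≥ p, ∀ k, relPow R (i + k * p) = relPow R i := by
  intro i hi k
  induction k with
  | zero => simp
  | succ k ih =>
    have : i + (k + 1) * p = (i + k * p) + p := by ring
    rw [this, hp.2 (i + k * p) (le_trans hi (Nat.le_add_right _ _)), ih]

lemma relPow_mul_p {X : Type*} (R : Rel X X) (p : ℕ) (hp : IsEventualPeriod R p)
    {m : ℕ} (hm : 1 ≤ m) : relPow R (m * p) = relPow R p := by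
  obtain ⟨m', rfl⟩ := Nat.exists_eq_add_of_le hm
  have h : (1 + m') * p = p + m' * p := by ring
  rw [h, relPow_periodic R p hp p le_rfl m']

lemma chain_decomp {X : Type*} (R : Rel X X) (p a : ℕ) :
    ∀ (k : ℕ) (x y : X), relPow R (a + k * p) x y →
      ∃ z : ℕ → X, relPow R a x (z 0) ∧ (∀ i < k, relPow R p (z i) (z (i + 1))) ∧ z k = y := by
  intro k
  induction k with
  | zero =>
    intro x y h
    simp only [Nat.zero_mul, Nat.add_zero] at h
    exact ⟨fun _ => y, h, by simp, rfl⟩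
  | succ k ih =>
    intro x y h
    have h' : relPow R ((a + k * p) + p) x y := by
      have : a + (k + 1) * p = (a + k * p) + p := by ring
      rwa [this] at h
    obtain ⟨w, hw, hwy⟩ := (relPow_add_s19 R (a + k * p) p x y).1 h'
    obtain ⟨z, hz0, hzstep, hzk⟩ := ih x w hw
    refine ⟨fun i => if i ≤ k then z i else y, by simpa using hz0, ?_, by simp⟩
    intro i hi
    rcases Nat.lt_or_ge i k with h1 | h1
    · simpa [Nat.le_of_lt h1, Nat.succ_le_of_lt h1] using hzstep i h1
    · have hik : i = k := le_antisymm (Nat.lt_succ_iff.mp hi) h1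
      subst hik
      simpa [hzk] using hwy

lemma chain_concat {X : Type*} (R : Rel X X) (p k : ℕ) (z : ℕ → X)
    (hz : ∀ i < k, relPow R p (z i) (z (i + 1))) :
    ∀ (d i : ℕ), i + d ≤ k → relPow R (d * p) (z i) (z (i + d)) := by
  intro d
  induction d with
  | zero => intro i _; simp [relPow]
  | succ d ih =>
    intro i hik
    have h1 : relPow R (d * p) (z i) (z (i + d)) := ih i (by omega)
    have h2 : relPow R p (z (i + d)) (z (i + d + 1)) := hz (i + d) (by omega)
    have : (d + 1) * p = d * p + p := by ring
    rw [this]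
    exact (relPow_add_s19 R (d * p) p _ _).2 ⟨z (i + d), h1, by simpa [Nat.add_assoc] using h2⟩

theorem pow_image_through_recurrent {X : Type*} [Finite X] (R : Rel X X) (p : ℕ)
    (hp : IsEventualPeriod R p) :
    ∀ (x : X) (n : ℕ),
      {y | relPow R (p + n) x y} =
        {y | ∃ z, (relPow R (p + n) x z ∧ z ∈ recurrentSet R) ∧ relPow R p z y} := by
  intro x n
  have hle : p ≤ p + n := Nat.le_add_right p n
  ext y
  simp only [Set.mem_setOf_eq]
  constructor
  · intro h
    have := Fintype.ofFinite X
    set N := Fintype.card X with hN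
    have h' : relPow R ((p + n) + N * p) x y := by
      rw [relPow_periodic R p hp (p + n) hle N]; exact h
    obtain ⟨z, hz0, hzstep, hzN⟩ := chain_decomp R p (p + n) N x y h'
    obtain ⟨i, j, hlt, heq⟩ : ∃ i j : ℕ, i < j ∧ j ≤ N ∧ z i = z j := by
      obtain ⟨a, b, hne, he⟩ := Fintype.exists_ne_map_eq_of_card_lt
        (fun i : Fin (N + 1) => z i) (by simp [hN])
      rcases hne.lt_or_gt with hab | hab
      · exact ⟨a, b, hab, Nat.lt_succ_iff.mp b.isLt, he⟩
      · exact ⟨b, a, hab, Nat.lt_succ_iff.mp a.isLt, he.symm⟩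
    obtain ⟨hjN, heq⟩ := heq
    refine ⟨z i, ⟨?_, ?_⟩, ?_⟩
    · -- relPow (p+n) x (z i)
      have h1 : relPow R (i * p) (z 0) (z i) := by
        simpa using chain_concat R p N z hzstep i 0 (by omega)
      have h2 : relPow R ((p + n) + i * p) x (z i) :=
        (relPow_add_s19 R (p + n) (i * p) x (z i)).2 ⟨z 0, hz0, h1⟩
      rwa [relPow_periodic R p hp (p + n) hle i] at h2
    · -- recurrent
      refine ⟨(j - i) * p, ?_, ?_⟩
      · have : 1 ≤ j - i := by omega
        calc 1 = 1 * 1 := by ring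
        _ ≤ (j - i) * p := Nat.mul_le_mul this hp.1
      · have := chain_concat R p N z hzstep (j - i) i (by omega)
        rw [show i + (j - i) = j by omega, ← heq] at this
        exact this
    · -- relPow p (z i) y
      have h1 : relPow R ((N - i) * p) (z i) (z N) := by
        have := chain_concat R p N z hzstep (N - i) i (by omega)
        rwa [show i + (N - i) = N by omega] at this
      rw [relPow_mul_p R p hp (by omega : 1 ≤ N - i), hzN] at h1
      exact h1
  · rintro ⟨z, ⟨hxz, _⟩, hzy⟩
    have h1 : relPow R ((p + n) + p) x y := (relPow_add_s19 R (p + n) p x y).2 ⟨z, hxz, hzy⟩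
    have h2 : (p + n) + p = (p + n) + 1 * p := by ring
    rw [h2, relPow_periodic R p hp (p + n) hle 1] at h1
    exact h1
end
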